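/- With ψ as in the paper's Definition 3.1 (parameters b, h > 0, r ≥ 1, p = 2r), the Fourier transform satisfies max_{v ∈ ℝ^d} ψ̂(v) = ψ̂(0) = (2πb)^{2r} · ((h√π · r!)/(2Γ(r+3/2)))^{2d}. -/

import Mathlib

/-!
Since `φ ≥ 0`, `|φ̂(v)| ≤ ∫ φ = φ̂(0)`, and the first factor of `ψ̂(v)` is at most `(2πb)^{2r}`
because the subtracted terms are even powers; both bounds are attained at `v = 0`. For the value,
`∫ φ = (h/2) ∫_{-1}^{1} (1 - t²)^r`, and integrating the derivative of `t (1 - t²)^{n+1}` gives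
`(2n+3) I_{n+1} = (2n+2) I_n`, the same recursion as `√π n! / Γ(n + 3/2)`; both equal `2` at `n = 0`.
-/

open MeasureTheory Real Set

noncomputable def polyBump (h : ℝ) (r : ℕ) (x : ℝ) : ℝ :=
  if |x| < h / 2 then (1 - (2 * x / h) ^ 2) ^ r else 0

lemma polyBump_eq_indicator (h : ℝ) (r : ℕ) :
    polyBump h r = (Ioo (-(h / 2)) (h / 2)).indicator fun x => (1 - (2 * x / h) ^ 2) ^ r := by
  ext x
  simp [polyBump, indicator, abs_lt]

lemma polyBump_nonneg (h : ℝ) (r : ℕ) (x : ℝ) : 0 ≤ polyBump h r x := by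
  unfold polyBump
  split_ifs with hx
  · have hh : 0 < h := by linarith [abs_nonneg x]
    have : |2 * x / h| ≤ 1 := by
      rw [abs_div, abs_mul, abs_two, abs_of_pos hh, div_le_one hh]
      linarith
    exact pow_nonneg (sub_nonneg.mpr (sq_le_one_iff_abs_le_one _ |>.mpr this)) r
  · exact le_rfl

lemma integrable_polyBump (h : ℝ) (r : ℕ) : Integrable (polyBump h r) := by
  rw [polyBump_eq_indicator, integrable_indicator_iff measurableSet_Ioo]
  exact (Continuous.integrableOn_Icc (by fun_prop)).mono_set Ioo_subset_Icc_self

lemma integral_one_sub_sq_pow_succ (n : ℕ) :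
    (2 * n + 3 : ℝ) * ∫ x in (-1 : ℝ)..1, (1 - x ^ 2) ^ (n + 1) =
      (2 * n + 2 : ℝ) * ∫ x in (-1 : ℝ)..1, (1 - x ^ 2) ^ n := by
  have hderiv : ∀ x ∈ uIcc (-1 : ℝ) 1, HasDerivAt (fun x : ℝ => x * (1 - x ^ 2) ^ (n + 1))
      ((2 * n + 3) * (1 - x ^ 2) ^ (n + 1) - (2 * n + 2) * (1 - x ^ 2) ^ n) x := by
    intro x _
    refine ((hasDerivAt_id' x).mul
      (((hasDerivAt_pow 2 x).const_sub 1).pow (n + 1))).congr_deriv ?_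
    simp only [Pi.pow_apply, Nat.cast_add, Nat.cast_one, Nat.add_sub_cancel, pow_succ]
    ring
  have hcont : ∀ k : ℕ, Continuous fun x : ℝ => (1 - x ^ 2) ^ k := fun k => by fun_prop
  have hftc := intervalIntegral.integral_eq_sub_of_hasDerivAt hderiv
    ((((hcont _).const_mul _).sub ((hcont _).const_mul _)).intervalIntegrable _ _)
  rw [intervalIntegral.integral_sub (((hcont _).intervalIntegrable _ _).const_mul _)
    (((hcont _).intervalIntegrable _ _).const_mul _), intervalIntegral.integral_const_mul,
    intervalIntegral.integral_const_mul] at hftc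
  norm_num at hftc
  linarith

theorem integral_one_sub_sq_pow (n : ℕ) :
    ∫ x in (-1 : ℝ)..1, (1 - x ^ 2) ^ n = √π * n.factorial / Gamma (n + 3 / 2) := by
  induction n with
  | zero =>
    rw [show ((0 : ℕ) : ℝ) + 3 / 2 = 1 / 2 + 1 by norm_num, Gamma_add_one (by norm_num),
      Gamma_one_half_eq]
    field_simp
    norm_num
  | succ n ih =>
    have hΓ : Gamma (↑(n + 1) + 3 / 2) = (n + 3 / 2) * Gamma (n + 3 / 2) := by
      rw [Nat.cast_succ, add_right_comm, Gamma_add_one (by positivity)]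
    have hΓpos : 0 < Gamma (n + 3 / 2) := Gamma_pos_of_pos (by positivity)
    have hrec := integral_one_sub_sq_pow_succ n
    rw [ih] at hrec
    rw [hΓ, Nat.factorial_succ, eq_div_iff (by positivity)]
    field_simp at hrec ⊢
    push_cast
    linarith

lemma integral_polyBump {h : ℝ} (hh : 0 < h) (r : ℕ) :
    ∫ x, polyBump h r x = h / 2 * ∫ t in (-1 : ℝ)..1, (1 - t ^ 2) ^ r := by
  have hh2 : h / 2 ≠ 0 := by positivity
  have hscale : ∀ x, (1 - (2 * x / h) ^ 2) ^ r = (fun t : ℝ => (1 - t ^ 2) ^ r) (x / (h / 2)) :=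
    fun x => by field_simp
  rw [polyBump_eq_indicator, integral_indicator measurableSet_Ioo,
    ← integral_Ioc_eq_integral_Ioo, ← intervalIntegral.integral_of_le (by linarith),
    intervalIntegral.integral_congr fun x _ => hscale x,
    intervalIntegral.integral_comp_div (fun t => (1 - t ^ 2) ^ r) hh2, neg_div, div_self hh2,
    smul_eq_mul]

lemma abs_integral_mul_cos_le {α : Type*} [MeasurableSpace α] {μ : Measure α} {f : α → ℝ}
    (hf : 0 ≤ f) (hfi : Integrable f μ) (g : α → ℝ) :
    |∫ x, f x * cos (g x) ∂μ| ≤ ∫ x, f x ∂μ := by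
  refine (abs_integral_le_integral_abs).trans <|
    integral_mono_of_nonneg (ae_of_all _ fun x => abs_nonneg _) hfi (ae_of_all _ fun x => ?_)
  dsimp only
  rw [abs_mul, abs_of_nonneg (hf x)]
  exact mul_le_of_le_one_right (hf x) (abs_cos_le_one _)

theorem psi_hat_max_general (d r : ℕ) (hr : 1 ≤ r) (b h : ℝ) (hh : 0 < h)
    (φ : ℝ → ℝ)
    (hφ : ∀ x : ℝ, φ x = if |x| < h / 2 then (1 - (2 * x / h) ^ 2) ^ r else 0)
    (φhat : ℝ → ℝ) (hφhat : ∀ v : ℝ, φhat v = ∫ x : ℝ, φ x * Real.cos (2 * π * v * x))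
    (ψhat : (Fin d → ℝ) → ℝ)
    (hψhat : ∀ v : Fin d → ℝ, ψhat v =
      ((2 * π * b) ^ (2 * r) - ∑ s, (2 * π * v s) ^ (2 * r)) * ∏ l, (φhat (v l)) ^ 2) :
    (∀ v : Fin d → ℝ, ψhat v ≤ ψhat 0) ∧
    ψhat 0 = (2 * π * b) ^ (2 * r) *
      (h * Real.sqrt π * (Nat.factorial r) / (2 * Real.Gamma (r + 3 / 2))) ^ (2 * d) := by
  obtain rfl : φ = polyBump h r := funext hφ
  have hφhat0 : φhat 0 = h * √π * r.factorial / (2 * Gamma (r + 3 / 2)) := by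
    simp only [hφhat, mul_zero, zero_mul, cos_zero, mul_one, integral_polyBump hh,
      integral_one_sub_sq_pow]
    ring
  have hφhat_le : ∀ t, |φhat t| ≤ φhat 0 := fun t => by
    rw [hφhat t, hφhat 0]
    simpa using abs_integral_mul_cos_le (polyBump_nonneg h r) (integrable_polyBump h r) _
  have hψhat0 : ψhat 0 = (2 * π * b) ^ (2 * r) * φhat 0 ^ (2 * d) := by
    simp [hψhat, zero_pow (by omega : 2 * r ≠ 0), ← pow_mul]
  refine ⟨fun v => ?_, by rw [hψhat0, hφhat0]⟩
  have hpow : ∀ y : ℝ, 0 ≤ y ^ (2 * r) := (even_two_mul r).pow_nonneg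
  calc ψhat v ≤ (2 * π * b) ^ (2 * r) * ∏ l, φhat (v l) ^ 2 := by
        rw [hψhat]
        exact mul_le_mul_of_nonneg_right (sub_le_self _ (Finset.sum_nonneg fun s _ => hpow _))
          (Finset.prod_nonneg fun l _ => sq_nonneg _)
    _ ≤ (2 * π * b) ^ (2 * r) * ∏ _l : Fin d, φhat 0 ^ 2 := by
        refine mul_le_mul_of_nonneg_left (Finset.prod_le_prod (fun l _ => sq_nonneg _)
          fun l _ => ?_) (hpow _)
        exact sq_le_sq' (neg_le_of_abs_le (hφhat_le _)) (le_of_abs_le (hφhat_le _))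
    _ = ψhat 0 := by
        rw [hψhat0, Finset.prod_const, Finset.card_univ, Fintype.card_fin, ← pow_mul, mul_comm]

theorem psi_hat_max (d r : ℕ) (hd : 1 ≤ d) (hr : 1 ≤ r) (b h : ℝ) (hb : 0 < b) (hh : 0 < h)
    (φ : ℝ → ℝ)
    (hφ : ∀ x : ℝ, φ x = if |x| < h / 2 then (1 - (2 * x / h) ^ 2) ^ r else 0)
    (φhat : ℝ → ℝ) (hφhat : ∀ v : ℝ, φhat v = ∫ x : ℝ, φ x * Real.cos (2 * π * v * x))
    (ψhat : (Fin d → ℝ) → ℝ)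
    (hψhat : ∀ v : Fin d → ℝ, ψhat v =
      ((2 * π * b) ^ (2 * r) - ∑ s, (2 * π * v s) ^ (2 * r)) * ∏ l, (φhat (v l)) ^ 2) :
    (∀ v : Fin d → ℝ, ψhat v ≤ ψhat 0) ∧
    ψhat 0 = (2 * π * b) ^ (2 * r) *
      (h * Real.sqrt π * (Nat.factorial r) / (2 * Real.Gamma (r + 3 / 2))) ^ (2 * d) :=
  psi_hat_max_general d r hr b h hh φ hφ φhat hφhat ψhat hψhat
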